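/- arXiv:1703.00344 — 4 statements merged into one kernel-verified Lean document; each statement's English description precedes it below -/
import Mathlib

section
/- Let m, n ≥ 2. Suppose Φ₁ is a positive trace-preserving map on mn×mn complex matrices that is absolutely separating with respect to the bipartition m|n, and Φ₂ is a unital quantum channel on mn×mn matrices, i.e., Φ₂ is completely positive, trace-preserving, and Φ₂[I] = I. Then the composition Φ₂ ∘ Φ₁ is absolutely separating with respect to the bipartition m|n. -/
open Matrix Kronecker BigOperators
open scoped ComplexOrder

noncomputable section


def IsDM {ι : Type*} [Fintype ι] (ρ : Matrix ι ι ℂ) : Prop :=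
  ρ.PosSemidef ∧ ρ.trace = 1

def IsSep {ι κ : Type*} [Fintype ι] [Fintype κ]
    (ρ : Matrix (ι × κ) (ι × κ) ℂ) : Prop :=
  ∃ (k : ℕ) (p : Fin k → ℝ) (A : Fin k → Matrix ι ι ℂ) (B : Fin k → Matrix κ κ ℂ),
    (∀ i, 0 ≤ p i) ∧ (∑ i, p i = 1) ∧ (∀ i, IsDM (A i)) ∧ (∀ i, IsDM (B i)) ∧
    ρ = ∑ i, (p i : ℂ) • (A i ⊗ₖ B i)

def IsAbsSep {ι κ : Type*} [Fintype ι] [Fintype κ] [DecidableEq ι] [DecidableEq κ]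
    (ρ : Matrix (ι × κ) (ι × κ) ℂ) : Prop :=
  ∀ U : Matrix (ι × κ) (ι × κ) ℂ, U * Uᴴ = 1 → IsSep (U * ρ * Uᴴ)

/-- `Φ ⊗ Id` acting on matrices over a product index. -/
def tensorId {ι κ : Type*} [Fintype ι] [Fintype κ]
    (Φ : Matrix ι ι ℂ →ₗ[ℂ] Matrix ι ι ℂ)
    (X : Matrix (ι × κ) (ι × κ) ℂ) : Matrix (ι × κ) (ι × κ) ℂ :=
  Matrix.of fun p q => Φ (Matrix.of fun a b => X (a, p.2) (b, q.2)) p.1 q.1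

/-- Complete positivity via positivity of all identity extensions. -/
def IsCP {ι : Type*} [Fintype ι] (Φ : Matrix ι ι ℂ →ₗ[ℂ] Matrix ι ι ℂ) : Prop :=
  ∀ (k : ℕ) (X : Matrix (ι × Fin k) (ι × Fin k) ℂ), X.PosSemidef → (tensorId Φ X).PosSemidef

/-!
A positive, trace-preserving, unital map `Φ` sends a state `σ` into the convex hull of its
unitary orbit. Writing `σ = V diag(λ) V*` and `Φ σ = W diag(μ) W*`, one has `μ = D λ` for the
matrix `D j i = ⟨wⱼ, Φ (vᵢ vᵢ*) wⱼ⟩`, which is doubly stochastic: its entries are nonnegative by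
positivity, its rows sum to one by unitality and its columns by trace preservation. By Birkhoff's
theorem `D` is a mixture of permutation matrices, so `Φ σ` is a mixture of the states
`(W P V*) σ (W P V*)*`. The unitary orbit of an absolutely separable state consists of separable
states, and separable states form a convex set, so `Φ σ` is separable; applying this to `U Φ(·) U*`
for every unitary `U` gives absolute separability.
-/

lemma IsSep.posSemidef {ι κ : Type*} [Fintype ι] [Fintype κ]
    {ρ : Matrix (ι × κ) (ι × κ) ℂ} (h : IsSep ρ) : ρ.PosSemidef := by
  obtain ⟨k, p, A, B, hp, -, hA, hB, rfl⟩ := h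
  exact posSemidef_sum _ fun i _ =>
    ((hA i).1.kronecker (hB i).1).smul (by exact_mod_cast hp i)

lemma IsAbsSep.posSemidef {ι κ : Type*} [Fintype ι] [Fintype κ] [DecidableEq ι] [DecidableEq κ]
    {ρ : Matrix (ι × κ) (ι × κ) ℂ} (h : IsAbsSep ρ) : ρ.PosSemidef := by
  simpa using (h 1 (by simp)).posSemidef

lemma convex_setOf_isSep {ι κ : Type*} [Fintype ι] [Fintype κ] :
    Convex ℝ {ρ : Matrix (ι × κ) (ι × κ) ℂ | IsSep ρ} := by
  rintro _ ⟨k, p, A, B, hp, hp1, hA, hB, rfl⟩ _ ⟨l, q, C, D, hq, hq1, hC, hD, rfl⟩ a b ha hb hab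
  refine ⟨k + l, Fin.append (a • p) (b • q), Fin.append A C, Fin.append B D,
    Fin.addCases (by simpa using fun i => mul_nonneg ha (hp i))
      (by simpa using fun i => mul_nonneg hb (hq i)), ?_,
    Fin.addCases (by simpa using hA) (by simpa using hC),
    Fin.addCases (by simpa using hB) (by simpa using hD), ?_⟩
  · simp [Fin.sum_univ_add, ← Finset.mul_sum, hp1, hq1, hab]
  · simp [Fin.sum_univ_add, Finset.smul_sum, smul_smul, ← Complex.coe_smul]

section DoublyStochastic

variable {R n : Type*} [Field R] [LinearOrder R] [IsStrictOrderedRing R] [Fintype n] [DecidableEq n]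

lemma LinearMap.toMatrix'_mem_doublyStochastic {Ψ : (n → R) →ₗ[R] (n → R)}
    (hpos : ∀ x, 0 ≤ x → 0 ≤ Ψ x) (hunit : Ψ 1 = 1) (hsum : ∀ x, ∑ j, Ψ x j = ∑ j, x j) :
    LinearMap.toMatrix' Ψ ∈ doublyStochastic R n := by
  refine mem_doublyStochastic.2 ⟨fun j i => ?_, by rw [LinearMap.toMatrix'_mulVec, hunit], ?_⟩
  · simpa [LinearMap.toMatrix'_apply] using hpos (Pi.single i 1) (by simp [Pi.single_nonneg]) j
  · ext i
    simpa [vecMul, dotProduct, LinearMap.toMatrix'_apply] using hsum (Pi.single i 1)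

lemma mulVec_mem_convexHull_comp_perm {D : Matrix n n R} (hD : D ∈ doublyStochastic R n)
    (x : n → R) : D *ᵥ x ∈ convexHull R (Set.range fun π : Equiv.Perm n => x ∘ π) := by
  obtain ⟨w, hw0, hw1, rfl⟩ := exists_eq_sum_perm_of_mem_doublyStochastic hD
  refine mem_convexHull_of_exists_fintype w _ hw0 hw1 (fun π => ⟨π, rfl⟩) ?_
  simp [Matrix.sum_mulVec, Matrix.smul_mulVec, permMatrix_mulVec]

end DoublyStochastic

section Permutation

variable {R n : Type*} [CommRing R] [StarRing R] [Fintype n] [DecidableEq n]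

lemma Equiv.Perm.permMatrix_mem_unitaryGroup (π : Equiv.Perm n) :
    π.permMatrix R ∈ unitaryGroup n R := by
  rw [mem_unitaryGroup_iff, star_eq_conjTranspose, conjTranspose_permMatrix, ← permMatrix_mul]
  simp

lemma Equiv.Perm.permMatrix_mul_diagonal_mul_conjTranspose (π : Equiv.Perm n) (x : n → R) :
    π.permMatrix R * diagonal x * (π.permMatrix R)ᴴ = diagonal (x ∘ π) := by
  rw [conjTranspose_permMatrix, Equiv.Perm.permMatrix, Equiv.Perm.permMatrix,
    PEquiv.toMatrix_toPEquiv_mul, PEquiv.mul_toMatrix_toPEquiv]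
  exact submatrix_diagonal_equiv x π

end Permutation

section Mixing

variable {d : Type*} [Fintype d] [DecidableEq d]

lemma trace_unitary_conj {R : Type*} [CommRing R] [StarRing R] (U : unitary (Matrix d d R))
    (X : Matrix d d R) : ((U : Matrix d d R) * X * star (U : Matrix d d R)).trace = X.trace := by
  rw [trace_mul_cycle]
  simp

/-- `x ↦ (re ⟨wⱼ, Φ (∑ᵢ xᵢ vᵢ vᵢ*) wⱼ⟩)ⱼ`, where `vᵢ` and `wⱼ` are the columns of `V` and `W`. -/
def diagonalTransfer (Φ : Matrix d d ℂ →ₗ[ℂ] Matrix d d ℂ) (V W : Matrix d d ℂ) :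
    (d → ℝ) →ₗ[ℝ] (d → ℝ) where
  toFun x j := (star W * Φ (V * diagonal (fun i => (x i : ℂ)) * star V) * W) j j |>.re
  map_add' x y := by
    ext j
    simp [← diagonal_add, Matrix.mul_add, Matrix.add_mul]
  map_smul' r x := by
    ext j
    have : diagonal (fun i => (r : ℂ) * x i) = (r : ℂ) • diagonal (fun i => (x i : ℂ)) :=
      diagonal_smul (r : ℂ) fun i => (x i : ℂ)
    simp [this]

variable {Φ : Matrix d d ℂ →ₗ[ℂ] Matrix d d ℂ}

lemma diagonalTransfer_nonneg (hpos : ∀ X, X.PosSemidef → (Φ X).PosSemidef)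
    (V W : Matrix d d ℂ) {x : d → ℝ} (hx : 0 ≤ x) : 0 ≤ diagonalTransfer Φ V W x := by
  intro j
  have hdiag : (diagonal fun i => (x i : ℂ)).PosSemidef :=
    posSemidef_diagonal_iff.2 fun i => by exact_mod_cast hx i
  have := (hpos _ (hdiag.mul_mul_conjTranspose_same V)).conjTranspose_mul_mul_same W
  exact (Complex.nonneg_iff.1 this.diag_nonneg).1

lemma diagonalTransfer_one (hunit : Φ 1 = 1) (V W : unitary (Matrix d d ℂ)) :
    diagonalTransfer Φ V W 1 = 1 := by
  ext j
  simp [diagonalTransfer, hunit]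

lemma sum_diagonalTransfer (htr : ∀ X, (Φ X).trace = X.trace) (V W : unitary (Matrix d d ℂ))
    (x : d → ℝ) : ∑ j, diagonalTransfer Φ V W x j = ∑ j, x j := by
  set X := (V : Matrix d d ℂ) * diagonal (fun i => (x i : ℂ)) * star (V : Matrix d d ℂ)
  have h : (star (W : Matrix d d ℂ) * Φ X * W).trace = ∑ j, (x j : ℂ) := by
    simpa [X, htr, trace_unitary_conj] using trace_unitary_conj (star W) (Φ X)
  simpa [diagonalTransfer, Matrix.trace] using congrArg Complex.re h

theorem mem_convexHull_unitaryConj_of_unital (hpos : ∀ X, X.PosSemidef → (Φ X).PosSemidef)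
    (htr : ∀ X, (Φ X).trace = X.trace) (hunit : Φ 1 = 1) {σ : Matrix d d ℂ} (hσ : σ.PosSemidef) :
    Φ σ ∈ convexHull ℝ
      (Set.range fun U : unitary (Matrix d d ℂ) => Unitary.conjStarAlgAut ℂ _ U σ) := by
  obtain ⟨V, lam, hσeq⟩ : ∃ (V : unitary (Matrix d d ℂ)) (lam : d → ℝ),
      σ = Unitary.conjStarAlgAut ℂ _ V (diagonal fun i => (lam i : ℂ)) :=
    ⟨_, _, hσ.1.spectral_theorem⟩
  obtain ⟨W, μ, hτeq⟩ : ∃ (W : unitary (Matrix d d ℂ)) (μ : d → ℝ),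
      Φ σ = Unitary.conjStarAlgAut ℂ _ W (diagonal fun i => (μ i : ℂ)) :=
    ⟨_, _, (hpos σ hσ).1.spectral_theorem⟩
  set Ψ := diagonalTransfer Φ V W
  have hΨ : Ψ lam = μ := by
    ext j
    have : (Unitary.conjStarAlgAut ℂ _ W).symm (Φ σ) = diagonal fun i => (μ i : ℂ) := by
      rw [hτeq, StarAlgEquiv.symm_apply_apply]
    simpa [Ψ, diagonalTransfer, hσeq, Unitary.conjStarAlgAut_symm_apply] using
      congrArg (fun X => (X j j).re) this
  have hD : LinearMap.toMatrix' Ψ ∈ doublyStochastic ℝ d :=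
    LinearMap.toMatrix'_mem_doublyStochastic (fun _ => diagonalTransfer_nonneg hpos V W)
      (diagonalTransfer_one hunit V W) (sum_diagonalTransfer htr V W)
  have hmem := mulVec_mem_convexHull_comp_perm hD lam
  rw [LinearMap.toMatrix'_mulVec, hΨ] at hmem
  -- `f x = W diag(x) W*`
  let f : (d → ℝ) →ₗ[ℝ] Matrix d d ℂ :=
    (Unitary.conjStarAlgAut ℂ _ W).toAlgEquiv.toLinearMap.restrictScalars ℝ ∘ₗ
      diagonalLinearMap d ℝ ℂ ∘ₗ Complex.ofRealCLM.toLinearMap.compLeft d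
  rw [show Φ σ = f μ from hτeq]
  refine convexHull_mono ?_ (f.image_convexHull _ ▸ Set.mem_image_of_mem f hmem)
  rintro _ ⟨_, ⟨π, rfl⟩, rfl⟩
  refine ⟨W * ⟨π.permMatrix ℂ, π.permMatrix_mem_unitaryGroup⟩ * star V, ?_⟩
  simp only [Unitary.conjStarAlgAut_mul_apply, hσeq, ← Unitary.conjStarAlgAut_symm,
    StarAlgEquiv.symm_apply_apply]
  exact congrArg (Unitary.conjStarAlgAut ℂ _ W)
    (π.permMatrix_mul_diagonal_mul_conjTranspose fun i => (lam i : ℂ))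

end Mixing

lemma IsCP.posSemidef_map {ι : Type*} [Fintype ι] {Φ : Matrix ι ι ℂ →ₗ[ℂ] Matrix ι ι ℂ}
    (hΦ : IsCP Φ) {X : Matrix ι ι ℂ} (hX : X.PosSemidef) : (Φ X).PosSemidef :=
  (hΦ 1 _ (hX.submatrix Prod.fst)).submatrix fun a => (a, 0)

theorem IsAbsSep.map_of_unital {ι κ : Type*} [Fintype ι] [Fintype κ] [DecidableEq ι]
    [DecidableEq κ] {σ : Matrix (ι × κ) (ι × κ) ℂ} (hσ : IsAbsSep σ)
    {Φ : Matrix (ι × κ) (ι × κ) ℂ →ₗ[ℂ] Matrix (ι × κ) (ι × κ) ℂ}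
    (hpos : ∀ X, X.PosSemidef → (Φ X).PosSemidef) (htr : ∀ X, (Φ X).trace = X.trace)
    (hunit : Φ 1 = 1) : IsAbsSep (Φ σ) := by
  intro U hU
  let u : unitary (Matrix (ι × κ) (ι × κ) ℂ) := ⟨U, mem_unitaryGroup_iff.2 hU⟩
  have hmem := mem_convexHull_unitaryConj_of_unital
    (Φ := (Unitary.conjStarAlgAut ℂ _ u).toAlgEquiv.toLinearMap ∘ₗ Φ)
    (fun X hX => (hpos X hX).mul_mul_conjTranspose_same U)
    (fun X => (trace_unitary_conj u _).trans (htr X)) (by simp [hunit]) hσ.posSemidef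
  refine convexHull_min ?_ convex_setOf_isSep hmem
  rintro _ ⟨V, rfl⟩
  exact hσ V (mem_unitaryGroup_iff.1 V.2)

theorem stmt2_general (m n : ℕ)
    (Φ₁ Φ₂ : Matrix (Fin m × Fin n) (Fin m × Fin n) ℂ →ₗ[ℂ]
      Matrix (Fin m × Fin n) (Fin m × Fin n) ℂ)
    (h1as : ∀ ρ, IsDM ρ → IsAbsSep (Φ₁ ρ))
    (h2cp : IsCP Φ₂)
    (h2tr : ∀ X, (Φ₂ X).trace = X.trace)
    (h2unital : Φ₂ 1 = 1) :
    ∀ ρ, IsDM ρ → IsAbsSep (Φ₂ (Φ₁ ρ)) :=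
  fun ρ hρ => (h1as ρ hρ).map_of_unital (fun _ => h2cp.posSemidef_map) h2tr h2unital

theorem stmt2 (m n : ℕ) (hm : 2 ≤ m) (hn : 2 ≤ n)
    (Φ₁ Φ₂ : Matrix (Fin m × Fin n) (Fin m × Fin n) ℂ →ₗ[ℂ]
      Matrix (Fin m × Fin n) (Fin m × Fin n) ℂ)
    (h1pos : ∀ X, X.PosSemidef → (Φ₁ X).PosSemidef)
    (h1tr : ∀ X, (Φ₁ X).trace = X.trace)
    (h1as : ∀ ρ, IsDM ρ → IsAbsSep (Φ₁ ρ))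
    (h2cp : IsCP Φ₂)
    (h2tr : ∀ X, (Φ₂ X).trace = X.trace)
    (h2unital : Φ₂ 1 = 1) :
    ∀ ρ, IsDM ρ → IsAbsSep (Φ₂ (Φ₁ ρ)) :=
  stmt2_general m n Φ₁ Φ₂ h1as h2cp h2tr h2unital

end
end

section
/- Let m₁, n₁, m₂, n₂ ≥ 2, and let Φ₁ and Φ₂ be positive trace-preserving maps on m₁n₁×m₁n₁ and m₂n₂×m₂n₂ complex matrices respectively. Identify ℂ^{m₁n₁} ⊗ ℂ^{m₂n₂} ≅ ℂ^{m₁} ⊗ ℂ^{n₁} ⊗ ℂ^{m₂} ⊗ ℂ^{n₂} ≅ (ℂ^{m₁} ⊗ ℂ^{m₂}) ⊗ (ℂ^{n₁} ⊗ ℂ^{n₂}) by the canonical permutation of tensor factors. If Φ₁ ⊗ Φ₂ is absolutely separating with respect to the bipartition m₁m₂ | n₁n₂ under this identification, then Φ₁ is absolutely separating with respect to m₁|n₁ and Φ₂ is absolutely separating with respect to m₂|n₂. -/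
/-!
Fix a state σ₂ of the second system. For a unitary U, conjugating Φ₁(ρ₁) ⊗ Φ₂(σ₂) by U ⊗ 1
gives (U Φ₁(ρ₁) U†) ⊗ Φ₂(σ₂), which is separable across m₁m₂ | n₁n₂ by hypothesis. Tracing out
ℂ^{m₂} on the first party and ℂ^{n₂} on the second acts locally, so it keeps each product term a
product of states and hence preserves separability; since tr Φ₂(σ₂) = 1 it returns U Φ₁(ρ₁) U†.
The second map is handled the same way after swapping the roles of the two systems.
-/

open Matrix Kronecker BigOperators
open scoped ComplexOrder

noncomputable section


/-- The tensor product `Φ₁ ⊗ Φ₂` of linear maps, acting on matrices over a product index. -/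
def tensorMap {ι κ : Type*} [Fintype ι] [Fintype κ] [DecidableEq ι]
    (Φ₁ : Matrix ι ι ℂ →ₗ[ℂ] Matrix ι ι ℂ) (Φ₂ : Matrix κ κ ℂ →ₗ[ℂ] Matrix κ κ ℂ)
    (X : Matrix (ι × κ) (ι × κ) ℂ) : Matrix (ι × κ) (ι × κ) ℂ :=
  Matrix.of fun p q => ∑ a, ∑ b,
    Φ₁ (Matrix.single a b 1) p.1 q.1 *
      Φ₂ (Matrix.of fun c e => X (a, c) (b, e)) p.2 q.2

section Separability

variable {α β γ δ : Type*}

lemma IsDM.kronecker [Fintype α] [Fintype β] {A : Matrix α α ℂ} {B : Matrix β β ℂ}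
    (hA : IsDM A) (hB : IsDM B) :
    IsDM (A ⊗ₖ B) :=
  ⟨hA.1.kronecker hB.1, by rw [trace_kronecker, hA.2, hB.2, mul_one]⟩

lemma IsDM.reindex [Fintype α] [Fintype β] {A : Matrix α α ℂ} (hA : IsDM A) (e : α ≃ β) :
    IsDM (reindex e e A) :=
  ⟨hA.1.submatrix _, by rw [← hA.2]; exact e.symm.sum_comp fun a => A a a⟩

lemma isDM_single [Fintype α] [DecidableEq α] (a : α) : IsDM (single a a (1 : ℂ)) := by
  refine ⟨?_, by simp [trace, diag, single]⟩
  rw [← diagonal_single]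
  exact PosSemidef.diagonal fun i => by
    by_cases h : i = a <;> simp [h]

lemma exists_isDM [Fintype α] [Nonempty α] : ∃ ρ : Matrix α α ℂ, IsDM ρ := by
  classical
  exact ⟨_, isDM_single (Classical.arbitrary α)⟩

def traceRight [Fintype β] (M : Matrix (α × β) (α × β) ℂ) : Matrix α α ℂ :=
  of fun a a' => ∑ b, M (a, b) (a', b)

lemma traceRight_eq_sum_submatrix [Fintype β] (M : Matrix (α × β) (α × β) ℂ) :
    traceRight M = ∑ b, M.submatrix (·, b) (·, b) := by
  ext a a'
  simp [traceRight, Matrix.sum_apply]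

lemma trace_traceRight [Fintype α] [Fintype β] (M : Matrix (α × β) (α × β) ℂ) :
    (traceRight M).trace = M.trace := by
  simp [traceRight, trace, Fintype.sum_prod_type]

lemma IsDM.traceRight [Fintype α] [Fintype β] {M : Matrix (α × β) (α × β) ℂ} (hM : IsDM M) :
    IsDM (traceRight M) := by
  refine ⟨?_, by rw [trace_traceRight, hM.2]⟩
  rw [traceRight_eq_sum_submatrix]
  exact posSemidef_sum _ fun b _ => hM.1.submatrix _

lemma traceRight_kronecker [Fintype β] (X : Matrix α α ℂ) (Y : Matrix β β ℂ) :
    traceRight (X ⊗ₖ Y) = Y.trace • X := by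
  ext a a'
  simp [traceRight, trace, Finset.mul_sum, mul_comm]

lemma traceRight_reindex_kronecker [Fintype γ] [Fintype δ]
    (A : Matrix (α × γ) (α × γ) ℂ) (B : Matrix (β × δ) (β × δ) ℂ) :
    traceRight (reindex (Equiv.prodProdProdComm α β γ δ).symm
      (Equiv.prodProdProdComm α β γ δ).symm (A ⊗ₖ B)) = traceRight A ⊗ₖ traceRight B := by
  ext ⟨a, b⟩ ⟨a', b'⟩
  simp [traceRight, Fintype.sum_prod_type, Finset.sum_mul_sum]

lemma IsSep.traceRight_reindex [Fintype α] [Fintype β] [Fintype γ] [Fintype δ]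
    {ρ : Matrix ((α × γ) × (β × δ)) ((α × γ) × (β × δ)) ℂ} (hρ : IsSep ρ) :
    IsSep (traceRight (reindex (Equiv.prodProdProdComm α β γ δ).symm
      (Equiv.prodProdProdComm α β γ δ).symm ρ)) := by
  obtain ⟨k, p, A, B, hp, hp_sum, hA, hB, rfl⟩ := hρ
  refine ⟨k, p, fun i => traceRight (A i), fun i => traceRight (B i), hp, hp_sum,
    fun i => (hA i).traceRight, fun i => (hB i).traceRight, ?_⟩
  simp_rw [← traceRight_reindex_kronecker]
  ext x y
  simp only [traceRight, reindex_apply, submatrix_apply, of_apply, Matrix.sum_apply,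
    Matrix.smul_apply, smul_eq_mul, Finset.mul_sum]
  exact Finset.sum_comm

lemma IsSep.of_reindex_kronecker_left [Fintype α] [Fintype β] [Fintype γ] [Fintype δ]
    {X : Matrix (α × β) (α × β) ℂ} {Y : Matrix (γ × δ) (γ × δ) ℂ}
    (h : IsSep (reindex (Equiv.prodProdProdComm α β γ δ) (Equiv.prodProdProdComm α β γ δ)
      (X ⊗ₖ Y))) (hY : Y.trace = 1) : IsSep X := by
  have h' := h.traceRight_reindex
  rwa [← reindex_symm, Equiv.symm_apply_apply, traceRight_kronecker, hY, one_smul] at h'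

lemma IsSep.reindex_prodCongr [Fintype α] [Fintype β] [Fintype γ] [Fintype δ]
    {ρ : Matrix (α × β) (α × β) ℂ} (h : IsSep ρ) (e₁ : α ≃ γ) (e₂ : β ≃ δ) :
    IsSep (reindex (e₁.prodCongr e₂) (e₁.prodCongr e₂) ρ) := by
  obtain ⟨k, p, A, B, hp, hp_sum, hA, hB, rfl⟩ := h
  refine ⟨k, p, fun i => reindex e₁ e₁ (A i), fun i => reindex e₂ e₂ (B i), hp, hp_sum,
    fun i => (hA i).reindex e₁, fun i => (hB i).reindex e₂, ?_⟩
  simp_rw [kroneckerMap_reindex]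
  ext x y
  simp [Matrix.sum_apply]

lemma IsSep.of_reindex_kronecker_right [Fintype α] [Fintype β] [Fintype γ] [Fintype δ]
    {X : Matrix (α × β) (α × β) ℂ} {Y : Matrix (γ × δ) (γ × δ) ℂ}
    (h : IsSep (reindex (Equiv.prodProdProdComm α β γ δ) (Equiv.prodProdProdComm α β γ δ)
      (X ⊗ₖ Y))) (hX : X.trace = 1) : IsSep Y := by
  have hswap : reindex ((Equiv.prodComm α γ).prodCongr (Equiv.prodComm β δ))
      ((Equiv.prodComm α γ).prodCongr (Equiv.prodComm β δ))
      (reindex (Equiv.prodProdProdComm α β γ δ) (Equiv.prodProdProdComm α β γ δ) (X ⊗ₖ Y)) =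
      reindex (Equiv.prodProdProdComm γ δ α β) (Equiv.prodProdProdComm γ δ α β) (Y ⊗ₖ X) := by
    ext x y
    simp [mul_comm]
  exact (hswap ▸ h.reindex_prodCongr _ _).of_reindex_kronecker_left hX

end Separability

section AbsoluteSeparability

variable {α β γ δ : Type*} [Fintype α] [Fintype β] [Fintype γ] [Fintype δ]
  [DecidableEq α] [DecidableEq β] [DecidableEq γ] [DecidableEq δ]

lemma reindex_kronecker_conj {ι κ ν : Type*} [Fintype ι] [Fintype κ] [Fintype ν]
    (e : ι × κ ≃ ν) (U₁ A : Matrix ι ι ℂ) (U₂ B : Matrix κ κ ℂ) :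
    reindex e e (U₁ ⊗ₖ U₂) * reindex e e (A ⊗ₖ B) * (reindex e e (U₁ ⊗ₖ U₂))ᴴ =
      reindex e e ((U₁ * A * U₁ᴴ) ⊗ₖ (U₂ * B * U₂ᴴ)) := by
  rw [conjTranspose_reindex, conjTranspose_kronecker]
  simp only [reindex_apply, submatrix_mul_equiv, mul_kronecker_mul]

lemma reindex_kronecker_mul_conjTranspose {ι κ ν : Type*} [Fintype ι] [Fintype κ] [Fintype ν]
    [DecidableEq ι] [DecidableEq κ] [DecidableEq ν] (e : ι × κ ≃ ν)
    {U₁ : Matrix ι ι ℂ} {U₂ : Matrix κ κ ℂ} (hU₁ : U₁ * U₁ᴴ = 1) (hU₂ : U₂ * U₂ᴴ = 1) :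
    reindex e e (U₁ ⊗ₖ U₂) * (reindex e e (U₁ ⊗ₖ U₂))ᴴ = 1 := by
  simpa [hU₁, hU₂] using reindex_kronecker_conj e U₁ 1 U₂ 1

lemma IsAbsSep.isSep_reindex_kronecker_conj
    {X : Matrix (α × β) (α × β) ℂ} {Y : Matrix (γ × δ) (γ × δ) ℂ}
    (h : IsAbsSep (reindex (Equiv.prodProdProdComm α β γ δ) (Equiv.prodProdProdComm α β γ δ)
      (X ⊗ₖ Y)))
    {U₁ : Matrix (α × β) (α × β) ℂ} {U₂ : Matrix (γ × δ) (γ × δ) ℂ}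
    (hU₁ : U₁ * U₁ᴴ = 1) (hU₂ : U₂ * U₂ᴴ = 1) :
    IsSep (reindex (Equiv.prodProdProdComm α β γ δ) (Equiv.prodProdProdComm α β γ δ)
      ((U₁ * X * U₁ᴴ) ⊗ₖ (U₂ * Y * U₂ᴴ))) := by
  rw [← reindex_kronecker_conj]
  exact h _ (reindex_kronecker_mul_conjTranspose _ hU₁ hU₂)

lemma IsAbsSep.of_reindex_kronecker_left
    {X : Matrix (α × β) (α × β) ℂ} {Y : Matrix (γ × δ) (γ × δ) ℂ}
    (h : IsAbsSep (reindex (Equiv.prodProdProdComm α β γ δ) (Equiv.prodProdProdComm α β γ δ)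
      (X ⊗ₖ Y))) (hY : Y.trace = 1) : IsAbsSep X := fun U hU =>
  (h.isSep_reindex_kronecker_conj hU (U₂ := 1) (by simp)).of_reindex_kronecker_left
    (by simpa using hY)

lemma IsAbsSep.of_reindex_kronecker_right
    {X : Matrix (α × β) (α × β) ℂ} {Y : Matrix (γ × δ) (γ × δ) ℂ}
    (h : IsAbsSep (reindex (Equiv.prodProdProdComm α β γ δ) (Equiv.prodProdProdComm α β γ δ)
      (X ⊗ₖ Y))) (hX : X.trace = 1) : IsAbsSep Y := fun U hU =>
  (h.isSep_reindex_kronecker_conj (U₁ := 1) (by simp) hU).of_reindex_kronecker_right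
    (by simpa using hX)

end AbsoluteSeparability

lemma tensorMap_kronecker {ι κ : Type*} [Fintype ι] [Fintype κ] [DecidableEq ι]
    (Φ₁ : Matrix ι ι ℂ →ₗ[ℂ] Matrix ι ι ℂ) (Φ₂ : Matrix κ κ ℂ →ₗ[ℂ] Matrix κ κ ℂ)
    (X : Matrix ι ι ℂ) (Y : Matrix κ κ ℂ) :
    tensorMap Φ₁ Φ₂ (X ⊗ₖ Y) = Φ₁ X ⊗ₖ Φ₂ Y := by
  have hX : Φ₁ X = ∑ a, ∑ b, X a b • Φ₁ (single a b 1) := by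
    conv_lhs => rw [matrix_eq_sum_single X]
    simp only [map_sum, ← _root_.map_smul, smul_single, smul_eq_mul, mul_one]
  have hslice : ∀ a b, (of fun c e => X a b * Y c e) = X a b • Y := fun _ _ => rfl
  ext p q
  simp only [tensorMap, of_apply, hslice, _root_.map_smul, hX, kroneckerMap_apply, Matrix.sum_apply,
    Matrix.smul_apply, smul_eq_mul, Finset.sum_mul]
  exact Finset.sum_congr rfl fun a _ => Finset.sum_congr rfl fun b _ => by ring

theorem stmt4_general (m₁ n₁ m₂ n₂ : ℕ) (hm₁ : 2 ≤ m₁) (hn₁ : 2 ≤ n₁) (hm₂ : 2 ≤ m₂) (hn₂ : 2 ≤ n₂)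
    (Φ₁ : Matrix (Fin m₁ × Fin n₁) (Fin m₁ × Fin n₁) ℂ →ₗ[ℂ]
      Matrix (Fin m₁ × Fin n₁) (Fin m₁ × Fin n₁) ℂ)
    (Φ₂ : Matrix (Fin m₂ × Fin n₂) (Fin m₂ × Fin n₂) ℂ →ₗ[ℂ]
      Matrix (Fin m₂ × Fin n₂) (Fin m₂ × Fin n₂) ℂ)
    (h1tr : ∀ X, (Φ₁ X).trace = X.trace)
    (h2tr : ∀ X, (Φ₂ X).trace = X.trace)
    (hAS : ∀ ρ : Matrix ((Fin m₁ × Fin n₁) × (Fin m₂ × Fin n₂))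
        ((Fin m₁ × Fin n₁) × (Fin m₂ × Fin n₂)) ℂ, IsDM ρ →
      IsAbsSep (Matrix.reindex
        (Equiv.prodProdProdComm (Fin m₁) (Fin n₁) (Fin m₂) (Fin n₂))
        (Equiv.prodProdProdComm (Fin m₁) (Fin n₁) (Fin m₂) (Fin n₂))
        (tensorMap Φ₁ Φ₂ ρ))) :
    (∀ ρ₁, IsDM ρ₁ → IsAbsSep (Φ₁ ρ₁)) ∧ (∀ ρ₂, IsDM ρ₂ → IsAbsSep (Φ₂ ρ₂)) := by
  have : NeZero m₁ := ⟨by omega⟩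
  have : NeZero n₁ := ⟨by omega⟩
  have : NeZero m₂ := ⟨by omega⟩
  have : NeZero n₂ := ⟨by omega⟩
  obtain ⟨σ₁, hσ₁⟩ := exists_isDM (α := Fin m₁ × Fin n₁)
  obtain ⟨σ₂, hσ₂⟩ := exists_isDM (α := Fin m₂ × Fin n₂)
  refine ⟨fun ρ₁ hρ₁ => ?_, fun ρ₂ hρ₂ => ?_⟩
  · have h := hAS _ (hρ₁.kronecker hσ₂)
    rw [tensorMap_kronecker] at h
    exact h.of_reindex_kronecker_left (by rw [h2tr, hσ₂.2])
  · have h := hAS _ (hσ₁.kronecker hρ₂)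
    rw [tensorMap_kronecker] at h
    exact h.of_reindex_kronecker_right (by rw [h1tr, hσ₁.2])

theorem stmt4 (m₁ n₁ m₂ n₂ : ℕ) (hm₁ : 2 ≤ m₁) (hn₁ : 2 ≤ n₁) (hm₂ : 2 ≤ m₂) (hn₂ : 2 ≤ n₂)
    (Φ₁ : Matrix (Fin m₁ × Fin n₁) (Fin m₁ × Fin n₁) ℂ →ₗ[ℂ]
      Matrix (Fin m₁ × Fin n₁) (Fin m₁ × Fin n₁) ℂ)
    (Φ₂ : Matrix (Fin m₂ × Fin n₂) (Fin m₂ × Fin n₂) ℂ →ₗ[ℂ]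
      Matrix (Fin m₂ × Fin n₂) (Fin m₂ × Fin n₂) ℂ)
    (h1pos : ∀ X, X.PosSemidef → (Φ₁ X).PosSemidef)
    (h1tr : ∀ X, (Φ₁ X).trace = X.trace)
    (h2pos : ∀ X, X.PosSemidef → (Φ₂ X).PosSemidef)
    (h2tr : ∀ X, (Φ₂ X).trace = X.trace)
    (hAS : ∀ ρ : Matrix ((Fin m₁ × Fin n₁) × (Fin m₂ × Fin n₂))
        ((Fin m₁ × Fin n₁) × (Fin m₂ × Fin n₂)) ℂ, IsDM ρ →
      IsAbsSep (Matrix.reindex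
        (Equiv.prodProdProdComm (Fin m₁) (Fin n₁) (Fin m₂) (Fin n₂))
        (Equiv.prodProdProdComm (Fin m₁) (Fin n₁) (Fin m₂) (Fin n₂))
        (tensorMap Φ₁ Φ₂ ρ))) :
    (∀ ρ₁, IsDM ρ₁ → IsAbsSep (Φ₁ ρ₁)) ∧ (∀ ρ₂, IsDM ρ₂ → IsAbsSep (Φ₂ ρ₂)) :=
  stmt4_general m₁ n₁ m₂ n₂ hm₁ hn₁ hm₂ hn₂ Φ₁ Φ₂ h1tr h2tr hAS

end
end

section
/- Let m, n ≥ 2 and let Φ be a positive trace-preserving linear map on mn×mn complex matrices. If the maximal output purity satisfies ‖Φ‖²_{1→2} > 9/(mn+8), i.e., there exists a density matrix ρ on ℂ^{mn} with tr((Φ[ρ])²) > 9/(mn+8), then Φ is not absolutely separating with respect to the bipartition m|n. -/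
open Matrix Kronecker BigOperators
open scoped ComplexOrder

noncomputable section


/-! Let `σ = Φ ρ`, with eigenvalues `λ`. Since `tr σ² ≤ λ_max`, the hypothesis gives
`λ_max > 3 / (mn + 2)`; the three smallest of the other `mn - 1` eigenvalues sum to at most
`3 (1 - λ_max) / (mn - 1)`, hence to less than `λ_max`. Conjugate `σ` by a unitary sending the
eigenvectors of `λ_max` and of these three eigenvalues `λ_j, λ_k, λ_l` to `Φ⁺`, `|01⟩`, `|10⟩`,
`Φ⁻`. For `ψ = |01⟩ - |10⟩` the partial transpose of the result has
`⟨ψ, σ^Γ ψ⟩ = λ_j + λ_k + λ_l - λ_max < 0`, so it violates the PPT criterion and is not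
separable. -/

open ComplexConjugate

namespace Matrix

variable {ι κ α : Type*}

def partialTranspose (M : Matrix (ι × κ) (ι × κ) α) : Matrix (ι × κ) (ι × κ) α :=
  of fun x y => M (y.1, x.2) (x.1, y.2)

theorem partialTranspose_sum_smul_kronecker [CommSemiring α] {k : ℕ} (p : Fin k → α)
    (A : Fin k → Matrix ι ι α) (B : Fin k → Matrix κ κ α) :
    partialTranspose (∑ i, p i • (A i ⊗ₖ B i)) = ∑ i, p i • ((A i)ᵀ ⊗ₖ B i) := by
  ext x y
  simp [partialTranspose, sum_apply, kroneckerMap_apply]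

theorem star_single_sub_single_dotProduct_partialTranspose_mulVec [Fintype ι] [Fintype κ]
    [DecidableEq ι] [DecidableEq κ] [CommRing α] [StarRing α] (a₀ a₁ : ι) (b₀ b₁ : κ)
    (M : Matrix (ι × κ) (ι × κ) α) :
    star (Pi.single (a₀, b₁) 1 - Pi.single (a₁, b₀) 1 : ι × κ → α) ⬝ᵥ
        (partialTranspose M *ᵥ (Pi.single (a₀, b₁) 1 - Pi.single (a₁, b₀) 1)) =
      M (a₀, b₁) (a₀, b₁) + M (a₁, b₀) (a₁, b₀) - M (a₁, b₁) (a₀, b₀) - M (a₀, b₀) (a₁, b₁) := by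
  simp [sub_dotProduct, dotProduct_sub, mulVec_sub, partialTranspose]
  ring

end Matrix

theorem IsSep.posSemidef_partialTranspose {ι κ : Type*} [Fintype ι] [Fintype κ]
    {ρ : Matrix (ι × κ) (ι × κ) ℂ} (h : IsSep ρ) : ρ.partialTranspose.PosSemidef := by
  obtain ⟨k, p, A, B, hp, -, hA, hB, rfl⟩ := h
  rw [partialTranspose_sum_smul_kronecker]
  exact posSemidef_sum _ fun i _ =>
    ((hA i).1.transpose.kronecker (hB i).1).smul (Complex.zero_le_real.mpr (hp i))

namespace Matrix.IsHermitian

variable {𝕜 n : Type*} [RCLike 𝕜] [Fintype n] [DecidableEq n] {A : Matrix n n 𝕜}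

theorem trace_mul_self (hA : A.IsHermitian) :
    (A * A).trace = ∑ i, (hA.eigenvalues i : 𝕜) ^ 2 := by
  let V : Matrix n n 𝕜 := hA.eigenvectorUnitary
  let D : Matrix n n 𝕜 := diagonal (RCLike.ofReal ∘ hA.eigenvalues)
  have hV : star V * V = 1 := Unitary.coe_star_mul_self _
  have hsq : A * A = V * (D * D) * star V := by
    rw [show A = V * D * star V by simpa using hA.spectral_theorem]
    simp only [mul_assoc]
    rw [← mul_assoc (star V) V, hV, one_mul]
  rw [hsq, trace_mul_cycle, hV, one_mul]
  simp [D, sq]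

theorem exists_unitary_conj_apply (hA : A.IsHermitian)
    (b : OrthonormalBasis n 𝕜 (EuclideanSpace 𝕜 n)) :
    ∃ U : Matrix n n 𝕜, U * Uᴴ = 1 ∧ ∀ x y,
      (U * A * Uᴴ) x y = ∑ i, (hA.eigenvalues i : 𝕜) * (b i x * conj (b i y)) := by
  let G := (EuclideanSpace.basisFun n 𝕜).toBasis.toMatrix b
  let V : Matrix n n 𝕜 := hA.eigenvectorUnitary
  have hG : G ∈ unitaryGroup n 𝕜 :=
    (EuclideanSpace.basisFun n 𝕜).toMatrix_orthonormalBasis_mem_unitary b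
  have hU : G * star V ∈ unitaryGroup n 𝕜 :=
    mul_mem hG (Unitary.star_mem hA.eigenvectorUnitary.2)
  have hdiag : star V * A * V = diagonal (RCLike.ofReal ∘ hA.eigenvalues) := by
    simpa using hA.conjStarAlgAut_star_eigenvectorUnitary
  refine ⟨G * star V, mem_unitaryGroup_iff.mp hU, fun x y => ?_⟩
  have hconj : G * star V * A * (G * star V)ᴴ = G * (star V * A * V) * star G := by
    simp only [← star_eq_conjTranspose, star_mul, star_star, mul_assoc]
  rw [hconj, hdiag, mul_apply]
  simp only [mul_diagonal, G, Module.Basis.toMatrix_apply,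
    OrthonormalBasis.coe_toBasis_repr_apply, EuclideanSpace.basisFun_repr, star_apply,
    RCLike.star_def, Function.comp_apply]
  exact Finset.sum_congr rfl fun i _ => by ring

end Matrix.IsHermitian

namespace OrthonormalBasis

variable {𝕜 E ι ι' : Type*} [RCLike 𝕜] [NormedAddCommGroup E] [InnerProductSpace 𝕜 E]
  [Fintype ι]

theorem exists_comp_embedding_eq [FiniteDimensional 𝕜 E]
    (hcard : Module.finrank 𝕜 E = Fintype.card ι) {u : ι' → E} (hu : Orthonormal 𝕜 u)
    (f : ι' ↪ ι) : ∃ b : OrthonormalBasis ι 𝕜 E, ∀ t, b (f t) = u t := by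
  classical
  let v : ι → E := Function.extend f u 0
  have hv : ∀ t, v (f t) = u t := f.injective.extend_apply u 0
  have hrestrict :
      (Set.range f).domRestrict v = u ∘ (Equiv.ofInjective f f.injective).symm := by
    funext ⟨_, t, rfl⟩
    simp [hv]
  obtain ⟨b, hb⟩ := Orthonormal.exists_orthonormalBasis_extension_of_card_eq hcard
    (s := Set.range f) (hrestrict ▸ hu.comp _ (Equiv.injective _))
  exact ⟨b, fun t => (hb _ ⟨t, rfl⟩).trans (hv t)⟩

theorem sum_mul_sum_conj_inner_mul_inner [Fintype ι'] [DecidableEq ι]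
    (b : OrthonormalBasis ι 𝕜 E) (f : ι' → ι) (lam : ι → 𝕜) (s : ι' → 𝕜) :
    ∑ i, lam i * ∑ t, s t * (conj (inner 𝕜 (b (f t)) (b i)) * inner 𝕜 (b (f t)) (b i)) =
      ∑ t, s t * lam (f t) := by
  simp only [b.inner_eq_ite, apply_ite, map_one, map_zero, mul_one, mul_zero, Finset.mul_sum]
  rw [Finset.sum_comm]
  simp [mul_comm]

end OrthonormalBasis

theorem Finset.exists_subset_card_eq_mul_sum_le {ι : Type*} (f : ι → ℝ) (s : Finset ι) {r : ℕ}
    (hr : r ≤ s.card) :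
    ∃ t ⊆ s, t.card = r ∧ (s.card : ℝ) * ∑ i ∈ t, f i ≤ r * ∑ i ∈ s, f i := by
  classical
  induction s using Finset.strongInduction with
  | H s ih =>
    rcases hr.eq_or_lt with rfl | hlt
    · exact ⟨s, subset_rfl, rfl, le_rfl⟩
    obtain ⟨a, ha, hmax⟩ := s.exists_max_image f (card_pos.mp (by omega))
    have hcard : (s.erase a).card + 1 = s.card := card_erase_add_one ha
    obtain ⟨t, hts, htr, hle⟩ := ih (s.erase a) (erase_ssubset ha) (by omega)
    have htmax : ∑ i ∈ t, f i ≤ r * f a := by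
      simpa [htr] using
        sum_le_card_nsmul t f (f a) fun i hi => hmax i (mem_of_mem_erase (hts hi))
    refine ⟨t, hts.trans (erase_subset a s), htr, ?_⟩
    rw [← hcard, ← add_sum_erase s f ha]
    push_cast
    linear_combination hle + htmax

theorem exists_embedding_sum_three_lt {ι : Type*} [Fintype ι] (lam : ι → ℝ)
    (hnn : ∀ i, 0 ≤ lam i) (hsum : ∑ i, lam i = 1) (hcard : 4 ≤ Fintype.card ι)
    (hpur : 3 / (Fintype.card ι + 2) < ∑ i, lam i ^ 2) :
    ∃ f : Fin 4 ↪ ι, lam (f 1) + lam (f 2) + lam (f 3) < lam (f 0) := by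
  classical
  have : Nonempty ι := Fintype.card_pos_iff.mp (by omega)
  obtain ⟨i₀, hmax⟩ := Finite.exists_max lam
  have hsq : ∑ i, lam i ^ 2 ≤ lam i₀ := by
    calc ∑ i, lam i ^ 2 ≤ ∑ i, lam i * lam i₀ :=
          Finset.sum_le_sum fun i _ => by
            rw [sq]; exact mul_le_mul_of_nonneg_left (hmax i) (hnn i)
      _ = lam i₀ := by rw [← Finset.sum_mul, hsum, one_mul]
  obtain ⟨t, hts, ht3, hle⟩ := (Finset.univ.erase i₀).exists_subset_card_eq_mul_sum_le lam
    (r := 3) (by rw [Finset.card_erase_of_mem (Finset.mem_univ _), Finset.card_univ]; omega)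
  obtain ⟨j, k, l, hjk, hjl, hkl, rfl⟩ := Finset.card_eq_three.mp ht3
  have hj : j ≠ i₀ := Finset.ne_of_mem_erase (hts (by simp))
  have hk : k ≠ i₀ := Finset.ne_of_mem_erase (hts (by simp))
  have hl : l ≠ i₀ := Finset.ne_of_mem_erase (hts (by simp))
  refine ⟨⟨![i₀, j, k, l], fun a b hab => ?_⟩, ?_⟩
  · fin_cases a <;> fin_cases b <;> simp_all [eq_comm]
  · have hN : (4 : ℝ) ≤ Fintype.card ι := by exact_mod_cast hcard
    have hbig : 3 < (Fintype.card ι + 2) * lam i₀ := by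
      rw [← div_lt_iff₀' (by positivity)]; linarith
    rw [Finset.card_erase_of_mem (Finset.mem_univ _), Finset.card_univ,
      Finset.sum_erase_eq_sub (Finset.mem_univ _), hsum,
      Finset.sum_insert (by simp [hjk, hjl]), Finset.sum_pair hkl,
      Nat.cast_sub (by omega)] at hle
    push_cast at hle
    show lam j + lam k + lam l < lam i₀
    nlinarith

theorem IsDM.exists_embedding_eigenvalues_sum_three_lt {ι : Type*} [Fintype ι] [DecidableEq ι]
    {σ : Matrix ι ι ℂ} (hσ : IsDM σ) (hcard : 4 ≤ Fintype.card ι)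
    (hpur : 3 / (Fintype.card ι + 2) < ((σ * σ).trace).re) :
    ∃ f : Fin 4 ↪ ι, hσ.1.isHermitian.eigenvalues (f 1) + hσ.1.isHermitian.eigenvalues (f 2) +
      hσ.1.isHermitian.eigenvalues (f 3) < hσ.1.isHermitian.eigenvalues (f 0) := by
  have hsum : ∑ i, (hσ.1.isHermitian.eigenvalues i : ℂ) = 1 :=
    hσ.1.isHermitian.trace_eq_sum_eigenvalues.symm.trans hσ.2
  rw [hσ.1.isHermitian.trace_mul_self] at hpur
  exact exists_embedding_sum_three_lt _ hσ.1.eigenvalues_nonneg (by exact_mod_cast hsum) hcard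
    (by simpa [← Complex.ofReal_pow] using hpur)

section Bell

variable {ι κ : Type*} [Fintype ι] [Fintype κ] [DecidableEq ι] [DecidableEq κ]

/-- `Φ⁺, |01⟩, |10⟩, Φ⁻`, reading `a₀, b₀` as `|0⟩` and `a₁, b₁` as `|1⟩`. -/
def bellFrame (a₀ a₁ : ι) (b₀ b₁ : κ) : Fin 4 → EuclideanSpace ℂ (ι × κ) :=
  let c : ℂ := (Real.sqrt 2 : ℂ)⁻¹
  ![c • (EuclideanSpace.single (a₀, b₀) 1 + EuclideanSpace.single (a₁, b₁) 1),
    EuclideanSpace.single (a₀, b₁) 1, EuclideanSpace.single (a₁, b₀) 1,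
    c • (EuclideanSpace.single (a₀, b₀) 1 - EuclideanSpace.single (a₁, b₁) 1)]

lemma inv_sqrt_two_mul_self : ((Real.sqrt 2 : ℂ)⁻¹) * (Real.sqrt 2 : ℂ)⁻¹ = 1 / 2 := by
  rw [← mul_inv, ← Complex.ofReal_mul, Real.mul_self_sqrt zero_le_two]
  norm_num

theorem orthonormal_bellFrame {a₀ a₁ : ι} {b₀ b₁ : κ} (ha : a₀ ≠ a₁) (hb : b₀ ≠ b₁) :
    Orthonormal ℂ (bellFrame a₀ a₁ b₀ b₁) := by
  rw [orthonormal_iff_ite]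
  intro s t
  fin_cases s <;> fin_cases t <;>
    simp [-inner_self_eq_norm_sq_to_K, bellFrame, inner_add_left, inner_add_right,
      inner_sub_left, inner_sub_right, inner_smul_left, inner_smul_right,
      EuclideanSpace.inner_single_left, ha, hb, ha.symm, hb.symm] <;>
    linear_combination 2 * inv_sqrt_two_mul_self

/-- The left side is `⟨v, W v⟩` for the witness `W = (ψ ψ*)^Γ`, `ψ = |01⟩ - |10⟩`, which has
eigenvalue `-1` on `Φ⁺` and `1` on `|01⟩`, `|10⟩`, `Φ⁻`. -/
theorem bellWitness_eq_sum_inner (a₀ a₁ : ι) (b₀ b₁ : κ) (v : EuclideanSpace ℂ (ι × κ)) :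
    v (a₀, b₁) * conj (v (a₀, b₁)) + v (a₁, b₀) * conj (v (a₁, b₀))
      - v (a₁, b₁) * conj (v (a₀, b₀)) - v (a₀, b₀) * conj (v (a₁, b₁)) =
    ∑ t, ![-1, 1, 1, 1] t * (conj (inner ℂ (bellFrame a₀ a₁ b₀ b₁ t) v) *
      inner ℂ (bellFrame a₀ a₁ b₀ b₁ t) v) := by
  simp [-inner_conj_symm, Fin.sum_univ_four, bellFrame, EuclideanSpace.inner_single_left]
  linear_combination
    (v (a₁, b₁) * conj (v (a₀, b₀)) + v (a₀, b₀) * conj (v (a₁, b₁))) * 2 * inv_sqrt_two_mul_self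

theorem bellWitness_of_orthonormalBasis {n : Type*} [Fintype n] [DecidableEq n] {a₀ a₁ : ι}
    {b₀ b₁ : κ} (b : OrthonormalBasis n ℂ (EuclideanSpace ℂ (ι × κ))) {f : Fin 4 → n}
    (hbf : ∀ t, b (f t) = bellFrame a₀ a₁ b₀ b₁ t) (lam : n → ℂ) {M : Matrix (ι × κ) (ι × κ) ℂ}
    (hM : ∀ x y, M x y = ∑ i, lam i * (b i x * conj (b i y))) :
    M (a₀, b₁) (a₀, b₁) + M (a₁, b₀) (a₁, b₀) - M (a₁, b₁) (a₀, b₀) - M (a₀, b₀) (a₁, b₁) =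
      lam (f 1) + lam (f 2) + lam (f 3) - lam (f 0) := by
  simp only [hM, ← Finset.sum_add_distrib, ← Finset.sum_sub_distrib, ← mul_add, ← mul_sub]
  simp only [bellWitness_eq_sum_inner, ← hbf]
  rw [b.sum_mul_sum_conj_inner_mul_inner]
  simp [Fin.sum_univ_four]
  ring

end Bell

theorem stmt8 (m n : ℕ) (hm : 2 ≤ m) (hn : 2 ≤ n)
    (Φ : Matrix (Fin m × Fin n) (Fin m × Fin n) ℂ →ₗ[ℂ]
      Matrix (Fin m × Fin n) (Fin m × Fin n) ℂ)
    (hpos : ∀ X, X.PosSemidef → (Φ X).PosSemidef)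
    (htr : ∀ X, (Φ X).trace = X.trace)
    (hpur : ∃ ρ, IsDM ρ ∧ 9 / ((m : ℝ) * n + 8) < ((Φ ρ * Φ ρ).trace).re) :
    ¬ ∀ ρ, IsDM ρ → IsAbsSep (Φ ρ) := by
  intro habs
  obtain ⟨ρ, hρ, hpur⟩ := hpur
  have hσ : IsDM (Φ ρ) := ⟨hpos ρ hρ.1, (htr ρ).trans hρ.2⟩
  have hcard : Fintype.card (Fin m × Fin n) = m * n := by simp
  have hmn : 4 ≤ m * n := by nlinarith
  have hbound : 3 / ((Fintype.card (Fin m × Fin n) : ℝ) + 2) ≤ 9 / ((m : ℝ) * n + 8) := by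
    have hmn' : (4 : ℝ) ≤ m * n := by exact_mod_cast hmn
    rw [hcard, div_le_div_iff₀ (by positivity) (by positivity)]
    push_cast
    linarith
  obtain ⟨f, hf⟩ := hσ.exists_embedding_eigenvalues_sum_three_lt (hcard ▸ hmn)
    (hbound.trans_lt hpur)
  have h01 : (⟨0, by omega⟩ : Fin m) ≠ ⟨1, by omega⟩ := by simp
  have h01' : (⟨0, by omega⟩ : Fin n) ≠ ⟨1, by omega⟩ := by simp
  obtain ⟨b, hb⟩ := OrthonormalBasis.exists_comp_embedding_eq (by simp)
    (orthonormal_bellFrame h01 h01') f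
  obtain ⟨U, hU, hUσ⟩ := hσ.1.isHermitian.exists_unitary_conj_apply b
  have hppt := ((habs ρ hρ U hU).posSemidef_partialTranspose).dotProduct_mulVec_nonneg
    (Pi.single (⟨0, by omega⟩, ⟨1, by omega⟩) 1 - Pi.single (⟨1, by omega⟩, ⟨0, by omega⟩) 1)
  rw [star_single_sub_single_dotProduct_partialTranspose_mulVec,
    bellWitness_of_orthonormalBasis b hb _ hUσ] at hppt
  simp only [← map_add, ← map_sub, RCLike.ofReal_nonneg] at hppt
  linarith

end
end

section
/- Let N ≥ 2, q ∈ (−1, 1), and let D_q[X] = qX + (1−q)·tr(X)·I₂/2 be the qubit depolarizing map. If √((1+|q|)/(1−|q|)) > (3+|q|)/(1+|q|), then the N-qubit uniform local depolarizing map D_q^{⊗N} is not absolutely separating with respect to the bipartition 2^k | 2^{N−k} for any k with 1 ≤ k ≤ N−1. In particular, this holds whenever |q| > 1/N. -/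
open Matrix Kronecker BigOperators
open scoped ComplexOrder

noncomputable section


/-- `N`-fold tensor power `Φ^{⊗N}` of a linear map on `d × d` matrices. -/
def kronPowMap {d N : ℕ} (Φ : Matrix (Fin d) (Fin d) ℂ →ₗ[ℂ] Matrix (Fin d) (Fin d) ℂ)
    (X : Matrix (Fin N → Fin d) (Fin N → Fin d) ℂ) :
    Matrix (Fin N → Fin d) (Fin N → Fin d) ℂ :=
  Matrix.of fun f g => ∑ a : Fin N → Fin d, ∑ b : Fin N → Fin d,
    (∏ j, Φ (Matrix.single (a j) (b j) 1) (f j) (g j)) * X a b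

/-- Identification realizing the bipartition `2^k | 2^(N-k)` of `N` qubits. -/
def bipartEquiv (N k : ℕ) (h : k ≤ N) :
    (Fin N → Fin 2) ≃ Fin (2 ^ k) × Fin (2 ^ (N - k)) :=
  (finFunctionFinEquiv.trans
    (finCongr (by rw [← pow_add]; congr 1; omega))).trans finProdFinEquiv.symm

/-- The depolarizing map `D_q[X] = q X + (1-q) tr X · I / d`. -/
def depolL (d : ℕ) (q : ℝ) :
    Matrix (Fin d) (Fin d) ℂ →ₗ[ℂ] Matrix (Fin d) (Fin d) ℂ :=
  (q : ℂ) • LinearMap.id +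
    (((1 - q) / d : ℝ) : ℂ) •
      (Matrix.traceLinearMap (Fin d) ℂ ℂ).smulRight (1 : Matrix (Fin d) (Fin d) ℂ)

/-!
Feed the product state `|0…0⟩⟨0…0|` through `D_q^{⊗N}`. The output is diagonal, with weight
`∏ₗ (1 ± q)/2` on a computational basis state, and in the product basis `|i⟩ ⊗ |j⟩` of the
bipartition these weights factor as `α i * β j`. Rotating the plane of `|0…0⟩ = |i₀ j₀⟩`
and `|1…1⟩ = |i₁ j₁⟩` by `π/4` creates the coherence `(bᴺ - aᴺ)/2`, where
`a, b = (1 ± q)/2`. For a separable state, Cauchy–Schwarz over a product decomposition bounds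
the squared modulus of this coherence by the product of the populations of `|i₀ j₁⟩` and
`|i₁ j₀⟩`, which the factorisation identifies with `aᴺ bᴺ`. Hence absolute separability
forces `(aᴺ - bᴺ)² ≤ 4 aᴺ bᴺ`, which fails as soon as one of `aᴺ, bᴺ` exceeds six times the
other. This holds when `|q| > 1/N` because `log ((1 + t)/(1 - t)) ≥ 2t` and `e² > 6`; the
square-root condition forces `|q| > 1/2`.
-/

namespace Matrix.PosSemidef

variable {n : Type*} {A : Matrix n n ℂ}

lemma re_apply_self_nonneg (hA : A.PosSemidef) (i : n) : 0 ≤ (A i i).re :=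
  (Complex.nonneg_iff.mp hA.diag_nonneg).1

lemma ofReal_re_apply_self (hA : A.PosSemidef) (i : n) : ((A i i).re : ℂ) = A i i :=
  Complex.conj_eq_iff_re.mp (hA.1.apply i i)

lemma norm_apply_sq_le (hA : A.PosSemidef) (i j : n) :
    ‖A i j‖ ^ 2 ≤ (A i i).re * (A j j).re := by
  classical
  have hdet := (hA.submatrix ![i, j]).det_nonneg
  have hji : A j i = star (A i j) := by rw [← hA.1.apply i j, star_star]
  rw [det_fin_two, Complex.nonneg_iff] at hdet
  simp only [submatrix_apply, cons_val_zero, cons_val_one, hji] at hdet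
  rw [← ofReal_re_apply_self hA i, ← ofReal_re_apply_self hA j, Complex.star_def,
    Complex.mul_conj, Complex.normSq_eq_norm_sq] at hdet
  simpa [← Complex.ofReal_mul, ← Complex.ofReal_pow] using hdet.1

end Matrix.PosSemidef

section Separable

variable {ι κ : Type*} [Fintype ι] [Fintype κ]

lemma IsSep.exists_apply_eq {M : Matrix (ι × κ) (ι × κ) ℂ} (h : IsSep M) :
    ∃ (m : ℕ) (p : Fin m → ℝ) (A : Fin m → Matrix ι ι ℂ) (B : Fin m → Matrix κ κ ℂ),
      (∀ r, 0 ≤ p r) ∧ (∀ r, (A r).PosSemidef) ∧ (∀ r, (B r).PosSemidef) ∧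
      ∀ x y, M x y = ∑ r, (p r : ℂ) * (A r x.1 y.1 * B r x.2 y.2) := by
  obtain ⟨m, p, A, B, hp, -, hA, hB, rfl⟩ := h
  refine ⟨m, p, A, B, hp, fun r => (hA r).1, fun r => (hB r).1, fun x y => ?_⟩
  simp [Matrix.sum_apply, kroneckerMap_apply]

lemma IsSep.norm_apply_sq_le {M : Matrix (ι × κ) (ι × κ) ℂ} (h : IsSep M) (i₀ i₁ : ι)
    (j₀ j₁ : κ) :
    ‖M (i₀, j₀) (i₁, j₁)‖ ^ 2 ≤ (M (i₀, j₁) (i₀, j₁)).re * (M (i₁, j₀) (i₁, j₀)).re := by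
  obtain ⟨m, p, A, B, hp, hA, hB, hM⟩ := h.exists_apply_eq
  have hre : ∀ i j, (M (i, j) (i, j)).re = ∑ r, p r * ((A r i i).re * (B r j j).re) := by
    intro i j
    rw [hM, Complex.re_sum]
    refine Finset.sum_congr rfl fun r _ => ?_
    rw [← (hA r).ofReal_re_apply_self, ← (hB r).ofReal_re_apply_self]
    norm_cast
  have hnorm : ‖M (i₀, j₀) (i₁, j₁)‖ ≤ ∑ r, p r * (‖A r i₀ i₁‖ * ‖B r j₀ j₁‖) := by
    rw [hM]
    refine (norm_sum_le _ _).trans_eq (Finset.sum_congr rfl fun r _ => ?_)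
    rw [norm_mul, norm_mul, Complex.norm_of_nonneg (hp r)]
  have hw : ∀ r i j, 0 ≤ p r * ((A r i i).re * (B r j j).re) := fun r i j =>
    mul_nonneg (hp r) (mul_nonneg ((hA r).re_apply_self_nonneg i) ((hB r).re_apply_self_nonneg j))
  rw [hre, hre]
  refine (pow_le_pow_left₀ (norm_nonneg _) hnorm 2).trans
    (Finset.sum_sq_le_sum_mul_sum_of_sq_le_mul _ (fun r _ => hw r _ _) (fun r _ => hw r _ _)
      fun r _ => ?_)
  calc (p r * (‖A r i₀ i₁‖ * ‖B r j₀ j₁‖)) ^ 2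
      = p r ^ 2 * (‖A r i₀ i₁‖ ^ 2 * ‖B r j₀ j₁‖ ^ 2) := by ring
    _ ≤ p r ^ 2 * ((A r i₀ i₀).re * (A r i₁ i₁).re * ((B r j₀ j₀).re * (B r j₁ j₁).re)) := by
      gcongr
      · exact mul_nonneg ((hA r).re_apply_self_nonneg _) ((hA r).re_apply_self_nonneg _)
      · exact (hA r).norm_apply_sq_le i₀ i₁
      · exact (hB r).norm_apply_sq_le j₀ j₁
    _ = p r * ((A r i₀ i₀).re * (B r j₁ j₁).re) * (p r * ((A r i₁ i₁).re * (B r j₀ j₀).re)) :=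
      by ring

end Separable

section Givens

variable {α : Type*} [Fintype α] [DecidableEq α]

def givens (i j : α) (c s : ℝ) : Matrix α α ℂ :=
  1 + ((c : ℂ) - 1) • (single i i 1 + single j j 1) + (s : ℂ) • (single i j 1 - single j i 1)

variable {i j : α} {c s : ℝ}

lemma givens_mul_conjTranspose (hij : i ≠ j) (hcs : c ^ 2 + s ^ 2 = 1) :
    givens i j c s * (givens i j c s)ᴴ = 1 := by
  simp only [givens, conjTranspose_add, conjTranspose_sub, conjTranspose_smul, conjTranspose_one,
    conjTranspose_single, star_sub, star_one, Complex.star_def, Complex.conj_ofReal, add_mul,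
    mul_add, sub_mul, mul_sub, Matrix.smul_mul, Matrix.mul_smul, smul_add, smul_sub, smul_smul,
    one_mul, mul_one, single_mul_single_same, Matrix.single_mul_single_of_ne, ne_eq, hij,
    hij.symm, not_false_eq_true, smul_zero, add_zero, zero_add, sub_zero]
  have hcs' : (c : ℂ) ^ 2 + (s : ℂ) ^ 2 = 1 := by exact_mod_cast hcs
  match_scalars <;> grind

lemma givens_conj_diagonal_apply (d : α → ℂ) (x z : α) :
    (givens i j c s * diagonal d * (givens i j c s)ᴴ) x z =
      ∑ y, givens i j c s x y * d y * star (givens i j c s z y) := by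
  rw [mul_apply]
  simp only [mul_diagonal, conjTranspose_apply]

lemma givens_conj_diagonal_apply_left_right (hij : i ≠ j) (d : α → ℂ) :
    (givens i j c s * diagonal d * (givens i j c s)ᴴ) i j = c * s * (d j - d i) := by
  rw [givens_conj_diagonal_apply]
  simp [givens, single_apply, one_apply, hij, hij.symm, Finset.sum_add_distrib, add_mul, mul_add]
  ring

lemma givens_conj_diagonal_apply_self {x : α} (hi : x ≠ i) (hj : x ≠ j) (d : α → ℂ) :
    (givens i j c s * diagonal d * (givens i j c s)ᴴ) x x = d x := by
  rw [givens_conj_diagonal_apply]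
  simp [givens, one_apply, hi.symm, hj.symm]

end Givens

theorem not_isAbsSep_diagonal {ι κ : Type*} [Fintype ι] [Fintype κ] [DecidableEq ι]
    [DecidableEq κ] (d : ι × κ → ℝ) {i₀ i₁ : ι} {j₀ j₁ : κ} (hi : i₀ ≠ i₁) (hj : j₀ ≠ j₁)
    (h : 4 * (d (i₀, j₁) * d (i₁, j₀)) < (d (i₀, j₀) - d (i₁, j₁)) ^ 2) :
    ¬ IsAbsSep (diagonal fun x => (d x : ℂ)) := by
  intro hsep
  set c := √(1 / 2 : ℝ)
  have hcc : c * c = 1 / 2 := Real.mul_self_sqrt (by norm_num)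
  have hU := givens_mul_conjTranspose (i := (i₀, j₀)) (j := (i₁, j₁)) (by simp [hi])
    (show c ^ 2 + c ^ 2 = 1 by rw [sq, hcc]; norm_num)
  have hb := (hsep _ hU).norm_apply_sq_le i₀ i₁ j₀ j₁
  rw [givens_conj_diagonal_apply_left_right (by simp [hi]),
    givens_conj_diagonal_apply_self (by simp [hj.symm]) (by simp [hi]),
    givens_conj_diagonal_apply_self (by simp [hi.symm]) (by simp [hj])] at hb
  rw [← Complex.ofReal_mul, hcc, ← Complex.ofReal_sub, ← Complex.ofReal_mul, Complex.norm_real,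
    Real.norm_eq_abs, sq_abs, Complex.ofReal_re, Complex.ofReal_re] at hb
  nlinarith

section Bipartition

variable {N k : ℕ} (h : k ≤ N)

lemma bipartEquiv_symm_apply (i : Fin (2 ^ k)) (j : Fin (2 ^ (N - k))) (l : Fin N) :
    (bipartEquiv N k h).symm (i, j) l =
      if (2 ^ (N - k) * (i : ℕ) + j).testBit l then 1 else 0 := by
  rw [Nat.testBit_eq_decide_div_mod_eq]
  ext
  simp [bipartEquiv, finFunctionFinEquiv, add_comm (j : ℕ)]
  split_ifs <;> simp_all

lemma bipartEquiv_symm_apply_of_lt {l : Fin N} (hl : (l : ℕ) < N - k) (i i' : Fin (2 ^ k))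
    (j : Fin (2 ^ (N - k))) :
    (bipartEquiv N k h).symm (i, j) l = (bipartEquiv N k h).symm (i', j) l := by
  simp only [bipartEquiv_symm_apply, Nat.testBit_two_pow_mul_add _ j.isLt, if_pos hl]

lemma bipartEquiv_symm_apply_of_le {l : Fin N} (hl : N - k ≤ l) (i : Fin (2 ^ k))
    (j j' : Fin (2 ^ (N - k))) :
    (bipartEquiv N k h).symm (i, j) l = (bipartEquiv N k h).symm (i, j') l := by
  simp only [bipartEquiv_symm_apply, Nat.testBit_two_pow_mul_add _ j.isLt,
    Nat.testBit_two_pow_mul_add _ j'.isLt, if_neg (not_lt.2 hl)]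

lemma prod_bipartEquiv_symm_mul_prod {R : Type*} [CommMonoid R] (w : Fin 2 → R)
    (i₀ i₁ : Fin (2 ^ k)) (j₀ j₁ : Fin (2 ^ (N - k))) :
    (∏ l, w ((bipartEquiv N k h).symm (i₀, j₁) l)) *
        ∏ l, w ((bipartEquiv N k h).symm (i₁, j₀) l) =
      (∏ l, w ((bipartEquiv N k h).symm (i₀, j₀) l)) *
        ∏ l, w ((bipartEquiv N k h).symm (i₁, j₁) l) := by
  simp_rw [← Finset.prod_mul_distrib]
  refine Finset.prod_congr rfl fun l _ => ?_
  rcases lt_or_ge (l : ℕ) (N - k) with hl | hl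
  · rw [bipartEquiv_symm_apply_of_lt h hl i₀ i₁ j₁, bipartEquiv_symm_apply_of_lt h hl i₁ i₀ j₀]
    exact mul_comm _ _
  · rw [bipartEquiv_symm_apply_of_le h hl i₀ j₁ j₀, bipartEquiv_symm_apply_of_le h hl i₁ j₀ j₁]

lemma bipartEquiv_fst_ne (hk : 0 < k) {f g : Fin N → Fin 2} (hfg : ∀ l, f l ≠ g l) :
    (bipartEquiv N k h f).1 ≠ (bipartEquiv N k h g).1 := by
  intro hfst
  have hl : N - k ≤ N - 1 := by omega
  have := bipartEquiv_symm_apply_of_le h (l := ⟨N - 1, by omega⟩) hl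
    (bipartEquiv N k h f).1 (bipartEquiv N k h f).2 (bipartEquiv N k h g).2
  rw [Prod.mk.eta, Equiv.symm_apply_apply, hfst, Prod.mk.eta, Equiv.symm_apply_apply] at this
  exact hfg _ this

lemma bipartEquiv_snd_ne (hk : k < N) {f g : Fin N → Fin 2} (hfg : ∀ l, f l ≠ g l) :
    (bipartEquiv N k h f).2 ≠ (bipartEquiv N k h g).2 := by
  intro hsnd
  have := bipartEquiv_symm_apply_of_lt h (l := ⟨0, by omega⟩) (by simpa using hk)
    (bipartEquiv N k h f).1 (bipartEquiv N k h g).1 (bipartEquiv N k h f).2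
  rw [Prod.mk.eta, Equiv.symm_apply_apply, hsnd, Prod.mk.eta, Equiv.symm_apply_apply] at this
  exact hfg _ this

end Bipartition

lemma isDM_single_self {ι : Type*} [Fintype ι] [DecidableEq ι] (a : ι) :
    IsDM (single a a (1 : ℂ)) :=
  ⟨diagonal_single a (1 : ℂ) ▸ PosSemidef.diagonal (Pi.single_nonneg.2 zero_le_one),
    trace_single_eq_same a 1⟩

lemma prod_diagonal_apply {ι n R : Type*} [Fintype ι] [DecidableEq n] [CommMonoidWithZero R]
    (v : ι → n → R) (f g : ι → n) :
    ∏ j, diagonal (v j) (f j) (g j) = diagonal (fun f => ∏ j, v j (f j)) f g := by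
  by_cases hfg : f = g
  · simp [hfg]
  · obtain ⟨j, hj⟩ := Function.ne_iff.mp hfg
    rw [diagonal_apply_ne _ hfg]
    exact Finset.prod_eq_zero (Finset.mem_univ j) (diagonal_apply_ne _ hj)

section KronPow

variable {d N : ℕ} {Φ : Matrix (Fin d) (Fin d) ℂ →ₗ[ℂ] Matrix (Fin d) (Fin d) ℂ}

lemma kronPowMap_single (a b : Fin N → Fin d) :
    kronPowMap Φ (single a b 1) = of fun f g => ∏ j, Φ (single (a j) (b j) 1) (f j) (g j) := by
  ext f g
  simp [kronPowMap, single_apply, ite_and]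

lemma kronPowMap_single_const_of_eq_diagonal {s : Fin d} {v : Fin d → ℂ}
    (hΦ : Φ (single s s 1) = diagonal v) :
    kronPowMap Φ (single (fun _ : Fin N => s) (fun _ => s) 1) =
      diagonal fun f => ∏ j, v (f j) := by
  ext f g
  rw [kronPowMap_single, of_apply, hΦ]
  exact prod_diagonal_apply (fun _ => v) f g

end KronPow

lemma depolL_two_single_zero (q : ℝ) :
    depolL 2 q (single 0 0 1) = diagonal fun s => ((![(1 + q) / 2, (1 - q) / 2] s : ℝ) : ℂ) := by
  ext s t
  fin_cases s <;> fin_cases t <;> simp [depolL, one_apply]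
  ring

lemma half_lt_of_div_lt_sqrt {t : ℝ} (ht₀ : 0 ≤ t) (ht₁ : t < 1)
    (h : (3 + t) / (1 + t) < √((1 + t) / (1 - t))) : 1 / 2 < t := by
  by_contra! ht
  have hsqrt : √((1 + t) / (1 - t)) < 2 := by
    rw [Real.sqrt_lt' two_pos, div_lt_iff₀ (by linarith)]
    linarith
  have hdiv : 2 ≤ (3 + t) / (1 + t) := by
    rw [le_div_iff₀ (by linarith)]
    linarith
  linarith

lemma two_mul_le_log_div {t : ℝ} (ht₀ : 0 ≤ t) (ht₁ : t < 1) :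
    2 * t ≤ Real.log ((1 + t) / (1 - t)) := by
  rw [Real.log_div (by linarith) (by linarith)]
  have hs := Real.hasSum_log_sub_log_of_abs_lt_one (abs_lt.2 ⟨by linarith, ht₁⟩)
  simpa using le_hasSum hs 0 fun k _ => by positivity

lemma six_lt_div_pow {N : ℕ} (hN : 0 < N) {t : ℝ} (ht : 1 / (N : ℝ) < t) (ht₁ : t < 1) :
    6 < ((1 + t) / (1 - t)) ^ N := by
  have hN' : (0 : ℝ) < N := by exact_mod_cast hN
  have hNt : 1 < N * t := by rwa [div_lt_iff₀' hN'] at ht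
  have ht₀ : 0 ≤ t := by nlinarith
  have hlog : 2 < N * Real.log ((1 + t) / (1 - t)) := by
    nlinarith [two_mul_le_log_div ht₀ ht₁]
  have he : 6 < Real.exp 2 := by
    have := Real.exp_one_gt_d9
    rw [show (2 : ℝ) = 1 + 1 by norm_num, Real.exp_add]
    nlinarith
  calc (6 : ℝ) < Real.exp 2 := he
    _ < Real.exp (N * Real.log ((1 + t) / (1 - t))) := Real.exp_lt_exp.2 hlog
    _ = ((1 + t) / (1 - t)) ^ N := by
      rw [Real.exp_nat_mul, Real.exp_log (div_pos (by linarith) (by linarith))]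

lemma four_mul_lt_sub_sq_of_inv_lt {N : ℕ} (hN : 0 < N) {t : ℝ} (ht : 1 / (N : ℝ) < t)
    (ht₁ : t < 1) :
    4 * (((1 + t) / 2) ^ N * ((1 - t) / 2) ^ N) <
      (((1 + t) / 2) ^ N - ((1 - t) / 2) ^ N) ^ 2 := by
  have hB : 0 < ((1 - t) / 2) ^ N := pow_pos (by linarith) N
  have hA : ((1 + t) / 2) ^ N = ((1 + t) / (1 - t)) ^ N * ((1 - t) / 2) ^ N := by
    rw [← mul_pow, div_mul_div_cancel₀ (by linarith)]
  rw [hA]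
  nlinarith [mul_lt_mul_of_pos_right (six_lt_div_pow hN ht ht₁) hB, mul_pos hB hB]

lemma four_mul_lt_sub_sq_of_inv_lt_abs {N : ℕ} (hN : 0 < N) {q : ℝ} (hq₁ : -1 < q)
    (hq₂ : q < 1) (hq : 1 / (N : ℝ) < |q|) :
    4 * (((1 + q) / 2) ^ N * ((1 - q) / 2) ^ N) <
      (((1 + q) / 2) ^ N - ((1 - q) / 2) ^ N) ^ 2 := by
  rcases abs_cases q with ⟨hq', -⟩ | ⟨hq', -⟩
  · rw [hq'] at hq
    exact four_mul_lt_sub_sq_of_inv_lt hN hq hq₂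
  · rw [hq'] at hq
    have := four_mul_lt_sub_sq_of_inv_lt hN hq (by linarith)
    rw [sub_neg_eq_add, ← sub_eq_add_neg] at this
    linarith [mul_comm (((1 + q) / 2) ^ N) (((1 - q) / 2) ^ N),
      sub_sq_comm (((1 + q) / 2) ^ N) (((1 - q) / 2) ^ N)]

theorem not_absSeparating_kronPowMap_depolL {N k : ℕ} (hk : 0 < k) (hkN : k < N) {q : ℝ}
    (hq₁ : -1 < q) (hq₂ : q < 1) (hq : 1 / (N : ℝ) < |q|) :
    ¬ ∀ ρ : Matrix (Fin N → Fin 2) (Fin N → Fin 2) ℂ, IsDM ρ →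
      IsAbsSep (reindex (bipartEquiv N k hkN.le) (bipartEquiv N k hkN.le)
        (kronPowMap (depolL 2 q) ρ)) := by
  intro hall
  have hρ := hall _ (isDM_single_self fun _ => 0)
  rw [kronPowMap_single_const_of_eq_diagonal (depolL_two_single_zero q), reindex_apply,
    submatrix_diagonal_equiv] at hρ
  have hne : ∀ l : Fin N, (fun _ => 0 : Fin N → Fin 2) l ≠ (fun _ => 1 : Fin N → Fin 2) l :=
    fun _ => zero_ne_one
  refine not_isAbsSep_diagonal
    (fun x => ∏ l, ![(1 + q) / 2, (1 - q) / 2] ((bipartEquiv N k hkN.le).symm x l))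
    (bipartEquiv_fst_ne hkN.le hk hne) (bipartEquiv_snd_ne hkN.le hkN hne) ?_
    (by simpa [Function.comp_def] using hρ)
  rw [prod_bipartEquiv_symm_mul_prod]
  simp only [Prod.mk.eta, Equiv.symm_apply_apply, Finset.prod_const, Finset.card_univ,
    Fintype.card_fin, cons_val_zero, cons_val_one]
  exact four_mul_lt_sub_sq_of_inv_lt_abs (hk.trans hkN) hq₁ hq₂ hq

theorem stmt14 (N : ℕ) (q : ℝ) (hq₁ : -1 < q) (hq₂ : q < 1) :
    ((3 + |q|) / (1 + |q|) < Real.sqrt ((1 + |q|) / (1 - |q|)) →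
      ∀ (k : ℕ) (_ : 1 ≤ k) (_ : k ≤ N - 1),
        ¬ ∀ ρ : Matrix (Fin N → Fin 2) (Fin N → Fin 2) ℂ, IsDM ρ →
          IsAbsSep (Matrix.reindex (bipartEquiv N k (by omega)) (bipartEquiv N k (by omega))
            (kronPowMap (depolL 2 q) ρ))) ∧
    (1 / (N : ℝ) < |q| →
      ∀ (k : ℕ) (_ : 1 ≤ k) (_ : k ≤ N - 1),
        ¬ ∀ ρ : Matrix (Fin N → Fin 2) (Fin N → Fin 2) ℂ, IsDM ρ →
          IsAbsSep (Matrix.reindex (bipartEquiv N k (by omega)) (bipartEquiv N k (by omega))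
            (kronPowMap (depolL 2 q) ρ))) := by
  refine ⟨fun h k hk₁ hk₂ => ?_, fun h k hk₁ hk₂ =>
    not_absSeparating_kronPowMap_depolL hk₁ (by omega) hq₁ hq₂ h⟩
  have hN : (2 : ℝ) ≤ N := by exact_mod_cast (by omega : 2 ≤ N)
  have hq : 1 / 2 < |q| := half_lt_of_div_lt_sqrt (abs_nonneg q) (abs_lt.2 ⟨hq₁, hq₂⟩) h
  refine not_absSeparating_kronPowMap_depolL hk₁ (by omega) hq₁ hq₂ (lt_of_le_of_lt ?_ hq)
  gcongr

end
end
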